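/- Let N ≥ 1 and let f : 𝔸^N → 𝔸^N be a regular endomorphism of algebraic degree d ≥ 2 defined over a number field K. Then there exists a constant c > 0 such that every f-preperiodic point x = (x_1,…,x_N) ∈ ℚ̄^N satisfies C(x) := max_{1≤i≤N} C(x_i) ≤ c. -/

import Mathlib

noncomputable section

/-- The house `C(α)` of an algebraic number `α ∈ ℂ`: the maximum of the absolute values of
the complex roots of its minimal polynomial over `ℚ` (equivalently, of `σ(α)` over all
embeddings `σ : ℚ(α) ↪ ℂ`). -/
def house (α : ℂ) : ℝ :=
  sSup ((fun z : ℂ => ‖z‖) '' {β : ℂ | Polynomial.aeval β (minpoly ℚ α) = 0})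

/-- The self-map of `𝔸^N(ℂ)` induced by an `N`-tuple of polynomials. -/
def evalMap {N : ℕ} (f : Fin N → MvPolynomial (Fin N) ℂ) (z : Fin N → ℂ) : Fin N → ℂ :=
  fun i => MvPolynomial.eval z (f i)

/-- A polynomial has all of its coefficients in the subfield `K` of `ℂ`. -/
def CoeffsIn {n : ℕ} (K : Subfield ℂ) (p : MvPolynomial (Fin n) ℂ) : Prop :=
  ∀ m, MvPolynomial.coeff m p ∈ K

/-- `z` is preperiodic under `F`. -/
def IsPreperiodicPt {X : Type*} (F : X → X) (z : X) : Prop :=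
  ∃ n m : ℕ, 0 < m ∧ F^[n + m] z = F^[n] z

/-- `f = (f_1, …, f_N)` is a regular endomorphism of `𝔸^N` of algebraic degree `d`:
every `f_j` has total degree `d` and the common zero locus of the top-degree homogeneous
parts `f_j^+` is `{0}`. -/
def IsRegularEndo {N : ℕ} (f : Fin N → MvPolynomial (Fin N) ℂ) (d : ℕ) : Prop :=
  (∀ j, (f j).totalDegree = d) ∧
  ∀ z : Fin N → ℂ,
    (∀ j, MvPolynomial.eval z (MvPolynomial.homogeneousComponent d (f j)) = 0) → z = 0

/-!
A conjugate of a coordinate `x i` is `τ (x i)` for an automorphism `τ` of `ℂ`, since embeddings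
of countable fields into `ℂ` extend to automorphisms (transcendence bases have the cardinality of
the continuum). The point `τ ∘ x` is preperiodic for the conjugate map `τ f`, which is again
regular of degree `d`. For a regular map `‖f z‖ ≥ ε ‖z‖ ^ d - C ‖z‖ ^ (d - 1)`, so outside a large
ball the norm strictly increases along orbits and preperiodic points lie in that ball. As `f` is
defined over `K`, the map `τ f` only depends on `τ` restricted to `K`, and a number field has
finitely many embeddings into `ℂ`: finitely many balls suffice.
-/

open Cardinal

universe u

theorem IsAlgClosed.exists_ringEquiv_comp_algebraMap_eq {R K L : Type u} [Field R]
    [Countable R] [Field K] [Field L] [Algebra R K] [Algebra R L] [IsAlgClosed K] [IsAlgClosed L]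
    (hK : ℵ₀ < #K) (hKL : #K = #L) :
    ∃ τ : K ≃+* L, (τ : K →+* L).comp (algebraMap R K) = algebraMap R L := by
  have hR : #R ≤ ℵ₀ := mk_le_aleph0_iff.2 ‹_›
  obtain ⟨s, hs⟩ := exists_isTranscendenceBasis R K
  obtain ⟨t, ht⟩ := exists_isTranscendenceBasis R L
  have hst : #s = #t := by
    rw [← IsAlgClosed.cardinal_eq_cardinal_transcendence_basis_of_aleph0_lt' _ hs hR hK,
      ← IsAlgClosed.cardinal_eq_cardinal_transcendence_basis_of_aleph0_lt' _ ht hR (hKL ▸ hK),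
      hKL]
  obtain ⟨e⟩ := Cardinal.eq.1 hst
  -- both fields are algebraic closures of polynomial rings on equipotent sets of variables
  let := IsAlgClosed.isAlgClosure_of_transcendence_basis _ hs
  let := IsAlgClosed.isAlgClosure_of_transcendence_basis _ ht
  let e' : Algebra.adjoin R (Set.range ((↑) : s → K)) ≃ₐ[R]
      Algebra.adjoin R (Set.range ((↑) : t → L)) :=
    hs.1.aevalEquiv.symm.trans ((MvPolynomial.renameEquiv R e).trans ht.1.aevalEquiv)
  refine ⟨IsAlgClosure.equivOfEquiv K L e'.toRingEquiv, RingHom.ext fun r => ?_⟩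
  rw [RingHom.comp_apply,
    IsScalarTower.algebraMap_apply R (Algebra.adjoin R (Set.range ((↑) : s → K))) K r,
    RingEquiv.coe_toRingHom, IsAlgClosure.equivOfEquiv_algebraMap, AlgEquiv.coe_ringEquiv,
    e'.commutes, ← IsScalarTower.algebraMap_apply]

theorem Complex.exists_ringEquiv_comp_eq {R : Type} [Field R] [Countable R] (i j : R →+* ℂ) :
    ∃ τ : ℂ ≃+* ℂ, (τ : ℂ →+* ℂ).comp i = j :=
  @IsAlgClosed.exists_ringEquiv_comp_algebraMap_eq R ℂ ℂ _ _ _ _ i.toAlgebra j.toAlgebra _ _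
    (by rw [mk_complex]; exact aleph0_lt_continuum) rfl

open IntermediateField in
theorem Complex.exists_ringEquiv_apply_eq_of_aeval_minpoly_eq_zero {α β : ℂ}
    (hα : IsAlgebraic ℚ α) (hβ : Polynomial.aeval β (minpoly ℚ α) = 0) :
    ∃ τ : ℂ ≃+* ℂ, τ α = β := by
  have hint : IsIntegral ℚ α := hα.isIntegral
  have := adjoin.finiteDimensional hint
  have := Finsupp.Countable.of_moduleFinite (R := ℚ) (M := ℚ⟮α⟯)
  have hroot : β ∈ (minpoly ℚ α).aroots ℂ :=
    Polynomial.mem_aroots.2 ⟨minpoly.ne_zero hint, hβ⟩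
  obtain ⟨τ, hτ⟩ := exists_ringEquiv_comp_eq (algebraMap ℚ⟮α⟯ ℂ)
    ((algHomAdjoinIntegralEquiv ℚ hint).symm ⟨β, hroot⟩ : ℚ⟮α⟯ →+* ℂ)
  refine ⟨τ, ?_⟩
  simpa [algHomAdjoinIntegralEquiv_symm_apply_gen] using congr($hτ (AdjoinSimple.gen ℚ α))

theorem house_le_of_forall_ringEquiv {α : ℂ} (hα : IsAlgebraic ℚ α) {c : ℝ} (hc : 0 ≤ c)
    (h : ∀ τ : ℂ ≃+* ℂ, ‖τ α‖ ≤ c) : house α ≤ c := by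
  refine Real.sSup_le ?_ hc
  rintro _ ⟨β, hβ, rfl⟩
  obtain ⟨τ, rfl⟩ := Complex.exists_ringEquiv_apply_eq_of_aeval_minpoly_eq_zero hα hβ
  exact h τ

namespace MvPolynomial

variable {R σ ι : Type*}

theorem IsHomogeneous.eval_smul [CommSemiring R] {p : MvPolynomial σ R} {n : ℕ}
    (hp : p.IsHomogeneous n) (c : R) (z : σ → R) : eval (c • z) p = c ^ n * eval z p := by
  rw [eval_eq, eval_eq, Finset.mul_sum]
  refine Finset.sum_congr rfl fun m hm => ?_
  have hdeg : m.degree = n := by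
    rw [Finsupp.degree_eq_weight_one]; exact hp (mem_support_iff.1 hm)
  simp_rw [Pi.smul_apply, smul_eq_mul, mul_pow, Finset.prod_mul_distrib,
    Finset.prod_pow_eq_pow_sum]
  rw [show ∑ i ∈ m.support, m i = m.degree from rfl, hdeg]
  ring

theorem homogeneousComponent_map {S : Type*} [CommSemiring R] [CommSemiring S] (φ : R →+* S)
    (n : ℕ) (p : MvPolynomial σ R) :
    homogeneousComponent n (map φ p) = map φ (homogeneousComponent n p) := by
  ext m
  simp [coeff_homogeneousComponent, coeff_map, apply_ite φ]

theorem totalDegree_map_of_injective {S : Type*} [CommSemiring R] [CommSemiring S]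
    {φ : R →+* S} (hφ : Function.Injective φ) (p : MvPolynomial σ R) :
    (map φ p).totalDegree = p.totalDegree := by
  rw [totalDegree, totalDegree, support_map_of_injective p hφ]

theorem totalDegree_sub_homogeneousComponent_le [CommRing R] {p : MvPolynomial σ R} {n : ℕ}
    (hp : p.totalDegree ≤ n) : (p - homogeneousComponent n p).totalDegree ≤ n - 1 := by
  refine Finset.sup_le fun m hm => ?_
  rw [mem_support_iff, coeff_sub, coeff_homogeneousComponent] at hm
  split_ifs at hm with hmn
  · exact absurd (sub_self _) hm
  · have : m.degree ≤ n := (le_totalDegree (mem_support_iff.2 (by simpa using hm))).trans hp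
    change m.degree ≤ n - 1
    omega

theorem norm_eval_le_sum_norm_coeff_mul_pow [NormedCommRing R] [NormOneClass R] [Fintype σ]
    (p : MvPolynomial σ R) {z : σ → R} (hz : 1 ≤ ‖z‖) {k : ℕ} (hp : p.totalDegree ≤ k) :
    ‖eval z p‖ ≤ (∑ m ∈ p.support, ‖coeff m p‖) * ‖z‖ ^ k := by
  rw [eval_eq, Finset.sum_mul]
  refine (norm_sum_le _ _).trans (Finset.sum_le_sum fun m hm => ?_)
  refine (norm_mul_le _ _).trans (mul_le_mul_of_nonneg_left ?_ (norm_nonneg _))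
  calc ‖∏ i ∈ m.support, z i ^ m i‖
      ≤ ∏ i ∈ m.support, ‖z‖ ^ m i :=
        (Finset.norm_prod_le _ _).trans <| Finset.prod_le_prod (fun _ _ => norm_nonneg _)
          fun i _ => (norm_pow_le _ _).trans (pow_le_pow_left₀ (norm_nonneg _)
            (norm_le_pi_norm z i) _)
    _ = ‖z‖ ^ m.degree := Finset.prod_pow_eq_pow_sum _ _ _
    _ ≤ ‖z‖ ^ k := pow_le_pow_right₀ hz ((le_totalDegree hm).trans hp)

theorem exists_norm_eval_le_mul_pow [NormedCommRing R] [NormOneClass R] [Fintype σ] [Fintype ι]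
    (p : ι → MvPolynomial σ R) {k : ℕ} (hp : ∀ j, (p j).totalDegree ≤ k) :
    ∃ C, ∀ z : σ → R, 1 ≤ ‖z‖ → ‖fun j => eval z (p j)‖ ≤ C * ‖z‖ ^ k := by
  refine ⟨∑ j, ∑ m ∈ (p j).support, ‖coeff m (p j)‖, fun z hz => ?_⟩
  refine (pi_norm_le_iff_of_nonneg (by positivity)).2 fun j => ?_
  refine (norm_eval_le_sum_norm_coeff_mul_pow _ hz (hp j)).trans ?_
  gcongr
  exact Finset.single_le_sum (f := fun j => ∑ m ∈ (p j).support, ‖coeff m (p j)‖)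
    (fun _ _ => by positivity) (Finset.mem_univ j)

theorem exists_pos_mul_pow_le_norm_eval_of_isHomogeneous {𝕜 : Type*} [RCLike 𝕜] [Fintype σ]
    [Fintype ι] {g : ι → MvPolynomial σ 𝕜} {d : ℕ} (hd : d ≠ 0) (hg : ∀ j, (g j).IsHomogeneous d)
    (hzero : ∀ z : σ → 𝕜, (∀ j, eval z (g j) = 0) → z = 0) :
    ∃ ε > 0, ∀ z : σ → 𝕜, ε * ‖z‖ ^ d ≤ ‖fun j => eval z (g j)‖ := by
  obtain ⟨ε, hε, hsphere⟩ := (isCompact_sphere (0 : σ → 𝕜) 1).exists_forall_le'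
    (continuous_pi fun j => continuous_eval (g j)).norm.continuousOn (a := 0) fun u hu => by
      refine norm_pos_iff.2 fun h => ?_
      simp [hzero u (congr_fun h)] at hu
  refine ⟨ε, hε, fun z => ?_⟩
  rcases eq_or_ne z 0 with rfl | hz
  · simp [hd]
  have hz' : 0 < ‖z‖ := norm_pos_iff.2 hz
  have hscale : (fun j => eval ((‖z‖⁻¹ : 𝕜) • z) (g j)) =
      (‖z‖⁻¹ : 𝕜) ^ d • fun j => eval z (g j) :=
    _root_.funext fun j => (hg j).eval_smul _ z
  have := hsphere ((‖z‖⁻¹ : 𝕜) • z) (by simp [norm_smul, hz'.ne'])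
  rwa [hscale, norm_smul, norm_pow, norm_inv, RCLike.norm_ofReal, abs_norm, inv_pow,
    le_inv_mul_iff₀ (by positivity), mul_comm] at this

end MvPolynomial

theorem IsPreperiodicPt.map {X Y : Type*} {F : X → X} {G : Y → Y} {g : X → Y}
    (h : Function.Semiconj g F G) {x : X} (hx : IsPreperiodicPt F x) :
    IsPreperiodicPt G (g x) := by
  obtain ⟨n, m, hm, hnm⟩ := hx
  exact ⟨n, m, hm, by rw [← (h.iterate_right _).eq, ← (h.iterate_right _).eq, hnm]⟩

theorem IsPreperiodicPt.lt_of_forall_le_imp_lt_apply {X α : Type*} [LinearOrder α] {F : X → X}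
    {ν : X → α} {R : α} (hF : ∀ z, R ≤ ν z → ν z < ν (F z)) {x : X}
    (hx : IsPreperiodicPt F x) : ν x < R := by
  by_contra! hR
  have hgrow : ∀ k, R ≤ ν (F^[k] x) ∧ ν (F^[k] x) < ν (F^[k + 1] x) := by
    intro k
    induction k with
    | zero => exact ⟨hR, hF x hR⟩
    | succ k ih =>
      have hk : R ≤ ν (F^[k + 1] x) := ih.1.trans ih.2.le
      refine ⟨hk, ?_⟩
      rw [Function.iterate_succ_apply' F (k + 1)]
      exact hF _ hk
  obtain ⟨n, m, hm, hnm⟩ := hx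
  have hmono : StrictMono fun k => ν (F^[k] x) := strictMono_nat_of_lt_succ fun k => (hgrow k).2
  exact (hmono (Nat.lt_add_of_pos_right (n := n) hm)).ne' (congrArg ν hnm)

open MvPolynomial

section RegularEndo

variable {N d : ℕ} {f : Fin N → MvPolynomial (Fin N) ℂ}

theorem IsRegularEndo.exists_lt_norm_evalMap (hreg : IsRegularEndo f d) (hd : 2 ≤ d) :
    ∃ R, ∀ z, R ≤ ‖z‖ → ‖z‖ < ‖evalMap f z‖ := by
  set g := fun j => homogeneousComponent d (f j)
  obtain ⟨ε, hε, hlow⟩ := exists_pos_mul_pow_le_norm_eval_of_isHomogeneous (g := g) (by omega)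
    (fun j => homogeneousComponent_isHomogeneous d (f j)) hreg.2
  obtain ⟨C, hup⟩ := exists_norm_eval_le_mul_pow (fun j => f j - g j)
    fun j => totalDegree_sub_homogeneousComponent_le (hreg.1 j).le
  refine ⟨max 1 ((C + 2) / ε), fun z hz => ?_⟩
  have hz1 : 1 ≤ ‖z‖ := (le_max_left _ _).trans hz
  have hεz : C + 2 ≤ ε * ‖z‖ := (div_le_iff₀' hε).1 ((le_max_right _ _).trans hz)
  have hsplit : evalMap f z = (fun j => eval z (g j)) + fun j => eval z (f j - g j) := by
    ext j; simp [evalMap]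
  obtain ⟨e, rfl⟩ : ∃ e, d = e + 1 := ⟨d - 1, by omega⟩
  have hze : ‖z‖ ≤ ‖z‖ ^ e := le_self_pow₀ hz1 (by omega)
  calc ‖z‖ < 2 * ‖z‖ ^ e := by linarith
    _ ≤ ε * ‖z‖ ^ (e + 1) - C * ‖z‖ ^ e := by
        rw [pow_succ]; nlinarith [pow_nonneg (norm_nonneg z) e]
    _ ≤ ‖fun j => eval z (g j)‖ - ‖fun j => eval z (f j - g j)‖ :=
        sub_le_sub (hlow z) (by simpa using hup z hz1)
    _ ≤ ‖evalMap f z‖ := by rw [hsplit]; exact norm_sub_le_norm_add _ _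

theorem IsRegularEndo.exists_norm_le_of_isPreperiodicPt (hreg : IsRegularEndo f d) (hd : 2 ≤ d) :
    ∃ R, ∀ x, IsPreperiodicPt (evalMap f) x → ‖x‖ ≤ R := by
  obtain ⟨R, hR⟩ := hreg.exists_lt_norm_evalMap hd
  exact ⟨R, fun x hx => (hx.lt_of_forall_le_imp_lt_apply hR).le⟩

theorem semiconj_evalMap_map (φ : ℂ →+* ℂ) :
    Function.Semiconj (φ ∘ ·) (evalMap f) (evalMap fun i => map φ (f i)) :=
  fun z => funext fun i => map_eval φ z (f i)

theorem IsRegularEndo.map (τ : ℂ ≃+* ℂ) (hreg : IsRegularEndo f d) :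
    IsRegularEndo (fun i => map (τ : ℂ →+* ℂ) (f i)) d := by
  refine ⟨fun j => (totalDegree_map_of_injective τ.injective _).trans (hreg.1 j), fun z hz => ?_⟩
  have h0 := hreg.2 (τ.symm ∘ z) fun j => (τ : ℂ →+* ℂ).injective <| by
    rw [map_eval, map_zero, ← homogeneousComponent_map, ← hz j]
    congr 2
    exact _root_.funext fun i => τ.apply_symm_apply (z i)
  ext i
  simpa using congr_arg τ (congr_fun h0 i)

end RegularEndo

theorem CoeffsIn.exists_map_subtype_eq {n : ℕ} {K : Subfield ℂ} {p : MvPolynomial (Fin n) ℂ}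
    (hp : CoeffsIn K p) : ∃ q : MvPolynomial (Fin n) K, map K.subtype q = p :=
  mem_range_map_iff_coeffs_subset.2 fun _ ha => by
    obtain ⟨m, -, rfl⟩ := mem_coeffs_iff.1 ha
    exact ⟨⟨_, hp m⟩, rfl⟩

theorem preperiodic_points_bounded_house_general
    (N : ℕ)
    (K : Subfield ℂ) [FiniteDimensional ℚ K]
    (f : Fin N → MvPolynomial (Fin N) ℂ) (hfK : ∀ i, CoeffsIn K (f i))
    (d : ℕ) (hd : 2 ≤ d) (hreg : IsRegularEndo f d) :
    ∃ c : ℝ, 0 < c ∧ ∀ x : Fin N → ℂ, (∀ i, IsAlgebraic ℚ (x i)) →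
      IsPreperiodicPt (evalMap f) x → ∀ i, house (x i) ≤ c := by
  have : NumberField K := ⟨⟩
  have := Finsupp.Countable.of_moduleFinite (R := ℚ) (M := K)
  choose F hF using fun i => (hfK i).exists_map_subtype_eq
  have hmap (τ : ℂ ≃+* ℂ) : (fun i => map ((τ : ℂ →+* ℂ).comp K.subtype) (F i)) =
      fun i => map (τ : ℂ →+* ℂ) (f i) := by
    simp_rw [← map_map, hF]
  have hbound (e : K →+* ℂ) :
      ∃ R, ∀ x, IsPreperiodicPt (evalMap fun i => map e (F i)) x → ‖x‖ ≤ R := by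
    obtain ⟨τ, rfl⟩ := Complex.exists_ringEquiv_comp_eq K.subtype e
    rw [hmap]
    exact (hreg.map τ).exists_norm_le_of_isPreperiodicPt hd
  choose R hR using hbound
  obtain ⟨c, hc⟩ := (Set.finite_range R).bddAbove
  refine ⟨max c 1, by positivity, fun x hx hpre i =>
    house_le_of_forall_ringEquiv (hx i) (by positivity) fun τ => ?_⟩
  have hτx := hR ((τ : ℂ →+* ℂ).comp K.subtype) (τ ∘ x)
    (by rw [hmap]; exact hpre.map (semiconj_evalMap_map τ))
  calc ‖τ (x i)‖ ≤ ‖τ ∘ x‖ := norm_le_pi_norm (τ ∘ x) i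
    _ ≤ max c 1 := hτx.trans ((hc ⟨_, rfl⟩).trans (le_max_left _ _))

/-- For a regular endomorphism `f` of `𝔸^N` of algebraic degree `d ≥ 2` over a number
field `K`, the houses of the coordinates of `f`-preperiodic algebraic points are uniformly
bounded. -/
theorem preperiodic_points_bounded_house
    (N : ℕ) (hN : 1 ≤ N)
    (K : Subfield ℂ) [CharZero K] [FiniteDimensional ℚ K]
    (f : Fin N → MvPolynomial (Fin N) ℂ) (hfK : ∀ i, CoeffsIn K (f i))
    (d : ℕ) (hd : 2 ≤ d) (hreg : IsRegularEndo f d) :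
    ∃ c : ℝ, 0 < c ∧ ∀ x : Fin N → ℂ, (∀ i, IsAlgebraic ℚ (x i)) →
      IsPreperiodicPt (evalMap f) x → ∀ i, house (x i) ≤ c :=
  preperiodic_points_bounded_house_general N K f hfK d hd hreg
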